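/- arXiv:2209.01939 — 4 statements merged into one kernel-verified Lean document; each statement's English description precedes it below -/
import Mathlib

section
/- For geometric sampling with parameter p ∈ (0,1), t₀ = 1/p ∈ ℕ, and probabilities p_{s,r} = p(1−p)^{s−r−1} for t₀ ≤ r < s and p_{s,r} = p(1−p)^{s−t₀} for 0 ≤ r < t₀, the collision probability satisfies Σ_{r=0}^{s−1} p_{s,r}² = (p/(2−p))·(1 + (1−p)^{2(s−t₀)+1}) for all s ≥ t₀. -/
open Finset

/- The first `t₀` observations share the weight `p (1-p)^(s-t₀)`, contributing
`t₀ p² (1-p)^(2(s-t₀)) = p (1-p)^(2(s-t₀))`; the remaining `s - t₀` weights form a geometric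
sequence whose squares sum to `p (1 - (1-p)^(2(s-t₀))) / (2-p)`, since `1 - (1-p)² = p (2-p)`. -/

theorem sum_range_ite_lt_reflect {M : Type*} [AddCommMonoid M] (g : ℕ → M) {t₀ s : ℕ}
    (hs : t₀ ≤ s) :
    ∑ r ∈ range s, (if r < t₀ then g (s - t₀) else g (s - r - 1)) =
      t₀ • g (s - t₀) + ∑ i ∈ range (s - t₀), g i := by
  obtain ⟨n, rfl⟩ := Nat.exists_eq_add_of_le hs
  rw [sum_range_add, Nat.add_sub_cancel_left, ← sum_range_reflect g n]
  congr 1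
  · rw [sum_congr rfl fun r hr => if_pos (mem_range.mp hr), sum_const, card_range]
  · refine sum_congr rfl fun i _ => ?_
    rw [if_neg (by omega)]
    congr 1
    omega

theorem one_sub_sq_mul_sum_range_sq_mul_pow {R : Type*} [CommRing R] (a q : R) (n : ℕ) :
    (1 - q ^ 2) * ∑ i ∈ range n, (a * q ^ i) ^ 2 = a ^ 2 * (1 - q ^ (2 * n)) := by
  simp_rw [mul_pow, ← pow_mul, mul_comm _ 2, pow_mul, ← mul_sum, mul_left_comm,
    mul_neg_geom_sum]

theorem geometric_sampling_collision_probability_general (p : ℝ)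
    (t₀ : ℕ) (ht₀ : (t₀ : ℝ) * p = 1) (s : ℕ) (hs : t₀ ≤ s) :
    ∑ r ∈ Finset.range s,
        (if r < t₀ then p * (1 - p) ^ (s - t₀) else p * (1 - p) ^ (s - r - 1)) ^ 2 =
      (p / (2 - p)) * (1 + (1 - p) ^ (2 * (s - t₀) + 1)) := by
  have hp : p ≠ 0 := right_ne_zero_of_mul_eq_one ht₀
  have h2p : 2 - p ≠ 0 := by
    intro h
    have : t₀ * 2 = 1 := by exact_mod_cast (show p = 2 by linarith) ▸ ht₀
    omega
  simp only [apply_ite (· ^ 2)]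
  rw [sum_range_ite_lt_reflect (fun i => (p * (1 - p) ^ i) ^ 2) hs, nsmul_eq_mul]
  set S := ∑ i ∈ range (s - t₀), (p * (1 - p) ^ i) ^ 2
  have hS : (2 - p) * S = p * (1 - (1 - p) ^ (2 * (s - t₀))) := mul_left_cancel₀ hp <| by
    linear_combination one_sub_sq_mul_sum_range_sq_mul_pow p (1 - p) (s - t₀)
  field_simp
  linear_combination (2 - p) * p * (1 - p) ^ (2 * (s - t₀)) * ht₀ + hS

theorem geometric_sampling_collision_probability (p : ℝ) (hp : p ∈ Set.Ioo (0 : ℝ) 1)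
    (t₀ : ℕ) (ht₀ : (t₀ : ℝ) * p = 1) (s : ℕ) (hs : t₀ ≤ s) :
    ∑ r ∈ Finset.range s,
        (if r < t₀ then p * (1 - p) ^ (s - t₀) else p * (1 - p) ^ (s - r - 1)) ^ 2 =
      (p / (2 - p)) * (1 + (1 - p) ^ (2 * (s - t₀) + 1)) :=
  geometric_sampling_collision_probability_general p t₀ ht₀ s hs
end

section
/- Let α ∈ (0,1) and t ≥ 2t₀ ≥ 2. Then α · Σ_{s'=0}^{t−t₀} (1−α)^{s'}/(t−s') ≤ (1−α)^{t/2} − (1−α)^{t−t₀+1} + α − α·log(α), using the identity Σ_{s'≥1} (1−α)^{s'}/s' = −log(α). -/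
open Finset Real

theorem uniform_sampling_log_bound (α : ℝ) (hα : α ∈ Set.Ioo (0 : ℝ) 1)
    (t₀ t : ℕ) (ht₀ : 1 ≤ t₀) (ht : 2 * t₀ ≤ t) :
    α * ∑ s' ∈ Finset.range (t - t₀ + 1), (1 - α) ^ s' / ((t : ℝ) - (s' : ℝ)) ≤
      (1 - α) ^ ((t : ℝ) / 2) - (1 - α) ^ (t - t₀ + 1) + α - α * Real.log α := by
  obtain ⟨hα0, hα1⟩ := hα
  have hx0 : (0:ℝ) < 1 - α := by linarith
  have hx1 : (1:ℝ) - α < 1 := by linarith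
  set m := (t + 1) / 2 with hm
  have hmn : m ≤ t - t₀ + 1 := by omega
  have ht2 : 2 ≤ t := by omega
  have hm1 : 1 ≤ m := by omega
  -- split the sum
  rw [Finset.range_eq_Ico, ← Finset.sum_Ico_consecutive _ (Nat.zero_le m) hmn, mul_add]
  have hS2 : α * ∑ s' ∈ Finset.Ico m (t - t₀ + 1), (1 - α) ^ s' / ((t:ℝ) - (s':ℝ)) ≤
      (1 - α) ^ ((t:ℝ)/2) - (1 - α) ^ (t - t₀ + 1) := by
    have h1 : ∑ s' ∈ Finset.Ico m (t - t₀ + 1), (1 - α) ^ s' / ((t:ℝ) - (s':ℝ)) ≤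
        ∑ s' ∈ Finset.Ico m (t - t₀ + 1), (1 - α) ^ s' := by
      apply Finset.sum_le_sum
      intro i hi
      simp only [Finset.mem_Ico] at hi
      have hit : (i:ℝ) + 1 ≤ (t:ℝ) := by exact_mod_cast (by omega : i + 1 ≤ t)
      exact div_le_self (pow_nonneg hx0.le i) (by linarith)
    have h2 : ∑ s' ∈ Finset.Ico m (t - t₀ + 1), (1 - α) ^ s' =
        ((1 - α) ^ (t - t₀ + 1) - (1 - α) ^ m) / ((1 - α) - 1) :=
      geom_sum_Ico (by linarith) hmn
    have h3 : α * ∑ s' ∈ Finset.Ico m (t - t₀ + 1), (1 - α) ^ s' =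
        (1 - α) ^ m - (1 - α) ^ (t - t₀ + 1) := by
      rw [h2, show (1 - α) - 1 = -α from by ring, div_neg, mul_neg,
        ← mul_div_assoc, mul_div_cancel_left₀ _ hα0.ne', neg_sub]
    have h4 : (1 - α) ^ m ≤ (1 - α) ^ ((t:ℝ)/2) := by
      rw [← Real.rpow_natCast (1 - α) m]
      apply Real.rpow_le_rpow_of_exponent_ge hx0 hx1.le
      have : t ≤ 2 * m := by omega
      have := (by exact_mod_cast this : (t:ℝ) ≤ 2 * (m:ℝ))
      linarith
    calc α * ∑ s' ∈ Finset.Ico m (t - t₀ + 1), (1 - α) ^ s' / ((t:ℝ) - (s':ℝ))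
        ≤ α * ∑ s' ∈ Finset.Ico m (t - t₀ + 1), (1 - α) ^ s' := by
          apply mul_le_mul_of_nonneg_left h1 hα0.le
      _ = (1 - α) ^ m - (1 - α) ^ (t - t₀ + 1) := h3
      _ ≤ (1 - α) ^ ((t:ℝ)/2) - (1 - α) ^ (t - t₀ + 1) := by linarith
  have hS1 : α * ∑ s' ∈ Finset.Ico 0 m, (1 - α) ^ s' / ((t:ℝ) - (s':ℝ)) ≤
      α - α * Real.log α := by
    have hsum := hasSum_pow_div_log_of_abs_lt_one
      (x := 1 - α) (by rw [abs_of_pos hx0]; linarith)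
    have hlog : (1:ℝ) - (1 - α) = α := by ring
    rw [hlog] at hsum
    have hrw : ∑ s' ∈ Finset.Ico 0 m, (1 - α) ^ s' / ((t:ℝ) - (s':ℝ)) =
        (∑ i ∈ Finset.range (m - 1), (1 - α) ^ (i + 1) / ((t:ℝ) - ((i:ℝ) + 1)))
          + 1 / (t:ℝ) := by
      rw [← Finset.range_eq_Ico, show m = (m - 1) + 1 from by omega,
        Finset.sum_range_succ']
      norm_num
    have hstep : ∑ i ∈ Finset.range (m - 1), (1 - α) ^ (i + 1) / ((t:ℝ) - ((i:ℝ) + 1))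
        ≤ ∑ i ∈ Finset.range (m - 1), (1 - α) ^ (i + 1) / ((i:ℝ) + 1) := by
      apply Finset.sum_le_sum
      intro i hi
      simp only [Finset.mem_range] at hi
      have h2i : 2 * (i + 1) ≤ t := by omega
      have h2i' : 2 * ((i:ℝ) + 1) ≤ (t:ℝ) := by exact_mod_cast h2i
      apply div_le_div_of_nonneg_left (pow_nonneg hx0.le _) (by positivity)
      linarith
    have htsum : ∑ i ∈ Finset.range (m - 1), (1 - α) ^ (i + 1) / ((i:ℝ) + 1)
        ≤ -Real.log α := by
      rw [← hsum.tsum_eq]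
      apply Summable.sum_le_tsum _ (fun i _ => by positivity) hsum.summable
    have ht1 : 1 / (t:ℝ) ≤ 1 := by
      rw [div_le_one (by positivity)]
      exact_mod_cast (by omega : 1 ≤ t)
    rw [hrw]
    have : (∑ i ∈ Finset.range (m - 1), (1 - α) ^ (i + 1) / ((t:ℝ) - ((i:ℝ) + 1)))
        + 1 / (t:ℝ) ≤ -Real.log α + 1 := by linarith
    calc α * ((∑ i ∈ Finset.range (m - 1), (1 - α) ^ (i + 1) / ((t:ℝ) - ((i:ℝ) + 1)))
          + 1 / (t:ℝ)) ≤ α * (-Real.log α + 1) :=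
        mul_le_mul_of_nonneg_left this hα0.le
      _ = α - α * Real.log α := by ring
  linarith
end

section
/- Let I = {t₀,…,t}, weights w_s ≥ 0 with Σ w_s ≤ 1, and for each s ∈ I a probability distribution (p_{s,r})_{0≤r<s}. Suppose random variables f(Z_s, Z_r) (for r < s, with Z_0, Z_1, … i.i.d.) have all pairwise covariances bounded in absolute value by σ² and that p_{s,r} ≤ p_{s',r} whenever s > s'. Then the variance of Σ_{s∈I} w_s Σ_{r<s} p_{s,r} f(Z_s, Z_r) is at most 4σ²·Σ_{s∈I} w_s² + 2σ²·Σ_{s∈I} Σ_{s'=t₀}^{s−1} w_s w_{s'} Σ_{r<s'} p_{s',r}², where covariance terms with four distinct indices among {s, s', r, r'} vanish by independence. -/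
open MeasureTheory ProbabilityTheory Finset

/-- Covariance of two real random variables. -/
noncomputable def covar {Ω : Type*} [MeasurableSpace Ω] (μ : Measure Ω)
    (X Y : Ω → ℝ) : ℝ :=
  ∫ ω, (X ω - ∫ ω', X ω' ∂μ) * (Y ω - ∫ ω', Y ω' ∂μ) ∂μ

/-!
The Hoeffding decomposition `f x y - m = v x + u y + k x y` (`m` the mean of `f` under `ν ⊗ ν`,
`v` and `u` centred, `k` centred in each argument) writes the estimator minus `m * ∑ s, w s` as
`∑ j, (α j * v (Z j) + β j * u (Z j)) + ∑ s, ∑ r < s, w s * p s r * k (Z s) (Z r)`, where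
`α j = w j` and `β j = ∑ s > j, w s * p s j`. In every product of two of these summands some index
occurs only once and can be integrated out first, so the summands are orthogonal, and with
`(α v + β u)² ≤ (α² + β²) (v² + u²)` the variance is at most
`(‖v‖² + ‖u‖²) ∑ j, (α j² + β j²) + ‖k‖² ∑ s, ∑ r, (w s * p s r)²`.
Now `∑ α j² = ∑ w s²`, `∑ (w s * p s r)² ≤ ∑ w s²`, monotonicity of `p` in `s` gives
`∑ β j² ≤ ∑ w s² + 2 ∑ s, ∑ s' < s, w s * w s' * ∑ r, p s' r²`, and `‖v‖² + ‖u‖² + ‖k‖²` is the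
variance of a single summand `f (Z s) (Z r)`, hence at most `σ2`.
-/

section Orthogonal

variable {Ω : Type*} [MeasurableSpace Ω] {μ : Measure Ω}

theorem integral_sq_sum_of_orthogonal {ι : Type*} (s : Finset ι) {X : ι → Ω → ℝ}
    (hX : ∀ i ∈ s, MemLp (X i) 2 μ)
    (horth : ∀ i ∈ s, ∀ j ∈ s, i ≠ j → ∫ ω, X i ω * X j ω ∂μ = 0) :
    ∫ ω, (∑ i ∈ s, X i ω) ^ 2 ∂μ = ∑ i ∈ s, ∫ ω, X i ω ^ 2 ∂μ := by
  have hint : ∀ i ∈ s, ∀ j ∈ s, Integrable (fun ω => X i ω * X j ω) μ :=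
    fun i hi j hj => (hX i hi).integrable_mul (hX j hj)
  simp_rw [sq, Finset.sum_mul_sum]
  rw [integral_finsetSum _ fun i hi => integrable_finsetSum _ fun j hj => hint i hi j hj]
  refine Finset.sum_congr rfl fun i hi => ?_
  rw [integral_finsetSum _ fun j hj => hint i hi j hj,
    Finset.sum_eq_single_of_mem i hi fun j hj hji => horth i hi j hj hji.symm]

theorem integral_sq_mul_add_mul_le {ν : Measure Ω} {v u : Ω → ℝ} (hv : MemLp v 2 ν)
    (hu : MemLp u 2 ν) (a b : ℝ) :
    ∫ x, (a * v x + b * u x) ^ 2 ∂ν ≤ (a ^ 2 + b ^ 2) * (∫ x, v x ^ 2 ∂ν + ∫ x, u x ^ 2 ∂ν) := by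
  have hv2 : Integrable (fun x => v x ^ 2) ν := hv.integrable_sq
  have hu2 : Integrable (fun x => u x ^ 2) ν := hu.integrable_sq
  rw [← integral_add hv2 hu2, ← integral_const_mul]
  refine integral_mono ((hv.const_mul a).add (hu.const_mul b)).integrable_sq
    ((hv2.add hu2).const_mul _) fun x => ?_
  nlinarith [sq_nonneg (a * u x - b * v x)]

theorem ProbabilityTheory.IndepFun.integral_eq_zero_of_integral_eq_zero [IsFiniteMeasure μ]
    {β γ : Type*} [MeasurableSpace β] [MeasurableSpace γ] {X : Ω → β} {Y : Ω → γ}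
    (hXY : IndepFun X Y μ) (hX : Measurable X) (hY : Measurable Y) {G : β → γ → ℝ}
    (hG : Measurable (Function.uncurry G)) (hint : Integrable (fun ω => G (X ω) (Y ω)) μ)
    (hcent : ∀ y, ∫ x, G x y ∂(μ.map X) = 0) :
    ∫ ω, G (X ω) (Y ω) ∂μ = 0 := by
  have hlaw := (indepFun_iff_map_prod_eq_prod_map_map hX.aemeasurable hY.aemeasurable).mp hXY
  have hXY' : AEMeasurable (fun ω => (X ω, Y ω)) μ := (hX.prodMk hY).aemeasurable
  have hintG : Integrable (Function.uncurry G) ((μ.map X).prod (μ.map Y)) := by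
    rw [← hlaw]
    exact (integrable_map_measure hG.aestronglyMeasurable hXY').mpr hint
  have hmap : ∫ ω, G (X ω) (Y ω) ∂μ = ∫ z, Function.uncurry G z ∂(μ.map fun ω => (X ω, Y ω)) :=
    (integral_map hXY' hG.aestronglyMeasurable).symm
  rw [hmap, hlaw, integral_prod_symm _ hintG]
  simp [hcent]

theorem MeasureTheory.MeasurePreserving.integral_comp_of_aestronglyMeasurable {β : Type*}
    [MeasurableSpace β] {ν : Measure β} {F : Ω → β} (hF : MeasurePreserving F μ ν) {g : β → ℝ}
    (hg : AEStronglyMeasurable g ν) : ∫ ω, g (F ω) ∂μ = ∫ y, g y ∂ν := by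
  rw [← hF.map_eq] at hg ⊢
  exact (integral_map hF.measurable.aemeasurable hg).symm

end Orthogonal

theorem sq_integral_le_integral_sq {α : Type*} [MeasurableSpace α] {ν : Measure α}
    [IsProbabilityMeasure ν] {h : α → ℝ} (hh : MemLp h 2 ν) :
    (∫ x, h x ∂ν) ^ 2 ≤ ∫ x, h x ^ 2 ∂ν := by
  have := variance_nonneg h ν
  rw [variance_eq_sub hh] at this
  simpa using this

theorem MeasureTheory.MemLp.integral_prod_left_of_two {α β : Type*} [MeasurableSpace α]
    [MeasurableSpace β] {ν₁ : Measure α} {ν₂ : Measure β} [SFinite ν₁]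
    [IsProbabilityMeasure ν₂] {g : α × β → ℝ} (hg : Measurable g) (h2 : MemLp g 2 (ν₁.prod ν₂)) :
    MemLp (fun x => ∫ y, g (x, y) ∂ν₂) 2 ν₁ := by
  have hsm : StronglyMeasurable fun x => ∫ y, g (x, y) ∂ν₂ :=
    hg.stronglyMeasurable.integral_prod_right'
  have hg2 : Integrable (fun z => g z ^ 2) (ν₁.prod ν₂) := h2.integrable_sq
  rw [memLp_two_iff_integrable_sq hsm.aestronglyMeasurable]
  refine hg2.integral_prod_left.mono (hsm.pow 2).aestronglyMeasurable ?_
  filter_upwards [hg2.prod_right_ae] with x hx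
  have hsec : MemLp (fun y => g (x, y)) 2 ν₂ :=
    (memLp_two_iff_integrable_sq (hg.comp measurable_prodMk_left).aestronglyMeasurable).mpr hx
  rw [Real.norm_of_nonneg (sq_nonneg _),
    Real.norm_of_nonneg (integral_nonneg fun y => sq_nonneg _)]
  exact sq_integral_le_integral_sq hsec

section Hoeffding

variable {α β : Type*} [MeasurableSpace α] [MeasurableSpace β]

structure IsDegenerateKernel (ν₁ : Measure α) (ν₂ : Measure β) (k : α → β → ℝ) : Prop where
  measurable : Measurable (Function.uncurry k)
  memLp : MemLp (Function.uncurry k) 2 (ν₁.prod ν₂)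
  integral_fst : ∀ y, ∫ x, k x y ∂ν₁ = 0
  integral_snd : ∀ x, ∫ y, k x y ∂ν₂ = 0

theorem IsDegenerateKernel.const_mul {ν₁ : Measure α} {ν₂ : Measure β} {k : α → β → ℝ}
    (hk : IsDegenerateKernel ν₁ ν₂ k) (c : ℝ) : IsDegenerateKernel ν₁ ν₂ fun x y => c * k x y where
  measurable := measurable_const.mul hk.measurable
  memLp := hk.memLp.const_mul c
  integral_fst y := by rw [integral_const_mul, hk.integral_fst, mul_zero]
  integral_snd x := by rw [integral_const_mul, hk.integral_snd, mul_zero]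

variable (ν₁ : Measure α) (ν₂ : Measure β) (f : α → β → ℝ)

noncomputable def hoeffdingFst (x : α) : ℝ :=
  ∫ y, f x y ∂ν₂ - ∫ z, Function.uncurry f z ∂(ν₁.prod ν₂)

noncomputable def hoeffdingSnd (y : β) : ℝ :=
  ∫ x, f x y ∂ν₁ - ∫ z, Function.uncurry f z ∂(ν₁.prod ν₂)

noncomputable def hoeffdingRem (x : α) (y : β) : ℝ :=
  f x y - hoeffdingFst ν₁ ν₂ f x - hoeffdingSnd ν₁ ν₂ f y -
    ∫ z, Function.uncurry f z ∂(ν₁.prod ν₂)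

theorem sub_integral_eq_hoeffdingFst_add_hoeffdingSnd_add_hoeffdingRem (x : α) (y : β) :
    f x y - ∫ z, Function.uncurry f z ∂(ν₁.prod ν₂) =
      hoeffdingFst ν₁ ν₂ f x + hoeffdingSnd ν₁ ν₂ f y + hoeffdingRem ν₁ ν₂ f x y := by
  rw [hoeffdingRem]
  ring

variable {ν₁ ν₂ f}

theorem measurable_hoeffdingFst [SFinite ν₂] (hf : Measurable (Function.uncurry f)) :
    Measurable (hoeffdingFst ν₁ ν₂ f) :=
  (hf.stronglyMeasurable.integral_prod_right' (ν := ν₂)).measurable.sub_const _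

theorem measurable_hoeffdingSnd [SFinite ν₁] (hf : Measurable (Function.uncurry f)) :
    Measurable (hoeffdingSnd ν₁ ν₂ f) :=
  (hf.stronglyMeasurable.integral_prod_left' (μ := ν₁)).measurable.sub_const _

variable [IsProbabilityMeasure ν₁] [IsProbabilityMeasure ν₂]

theorem memLp_hoeffdingFst (hf : Measurable (Function.uncurry f))
    (hf2 : MemLp (Function.uncurry f) 2 (ν₁.prod ν₂)) : MemLp (hoeffdingFst ν₁ ν₂ f) 2 ν₁ :=
  (hf2.integral_prod_left_of_two hf).sub (memLp_const _)

theorem memLp_hoeffdingSnd (hf : Measurable (Function.uncurry f))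
    (hf2 : MemLp (Function.uncurry f) 2 (ν₁.prod ν₂)) : MemLp (hoeffdingSnd ν₁ ν₂ f) 2 ν₂ :=
  ((hf2.comp_measurePreserving Measure.measurePreserving_swap).integral_prod_left_of_two
    (hf.comp measurable_swap)).sub (memLp_const _)

theorem integral_hoeffdingFst (hf : Integrable (Function.uncurry f) (ν₁.prod ν₂)) :
    ∫ x, hoeffdingFst ν₁ ν₂ f x ∂ν₁ = 0 := by
  have h : Integrable (fun x => ∫ y, f x y ∂ν₂) ν₁ := hf.integral_prod_left
  unfold hoeffdingFst
  rw [integral_sub h (integrable_const _), integral_const, integral_prod _ hf]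
  simp

theorem integral_hoeffdingSnd (hf : Integrable (Function.uncurry f) (ν₁.prod ν₂)) :
    ∫ y, hoeffdingSnd ν₁ ν₂ f y ∂ν₂ = 0 := by
  have h : Integrable (fun y => ∫ x, f x y ∂ν₁) ν₂ := hf.integral_prod_right
  unfold hoeffdingSnd
  rw [integral_sub h (integrable_const _), integral_const, integral_prod_symm _ hf]
  simp

/-- Holds for every `y`: when `f · y` is not integrable, neither is the remainder, and both
integrals vanish by convention. -/
theorem integral_hoeffdingRem_fst (hf : Integrable (Function.uncurry f) (ν₁.prod ν₂)) (y : β) :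
    ∫ x, hoeffdingRem ν₁ ν₂ f x y ∂ν₁ = 0 := by
  have hv : Integrable (hoeffdingFst ν₁ ν₂ f) ν₁ :=
    hf.integral_prod_left.sub (integrable_const _)
  by_cases hy : Integrable (fun x => f x y) ν₁
  · have h1 : Integrable (fun x => f x y - hoeffdingFst ν₁ ν₂ f x) ν₁ := hy.sub hv
    have h2 : Integrable (fun x => f x y - hoeffdingFst ν₁ ν₂ f x - hoeffdingSnd ν₁ ν₂ f y) ν₁ :=
      h1.sub (integrable_const _)
    simp only [hoeffdingRem]
    rw [integral_sub h2 (integrable_const _), integral_sub h1 (integrable_const _),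
      integral_sub hy hv,
      integral_hoeffdingFst hf, hoeffdingSnd]
    simp
  · refine integral_undef fun h => hy ?_
    refine ((h.add hv).add (integrable_const (hoeffdingSnd ν₁ ν₂ f y +
      ∫ z, Function.uncurry f z ∂(ν₁.prod ν₂)))).congr (Filter.Eventually.of_forall fun x => ?_)
    simp only [Pi.add_apply, hoeffdingRem]
    ring

theorem integral_hoeffdingRem_snd (hf : Integrable (Function.uncurry f) (ν₁.prod ν₂)) (x : α) :
    ∫ y, hoeffdingRem ν₁ ν₂ f x y ∂ν₂ = 0 := by
  have hu : Integrable (hoeffdingSnd ν₁ ν₂ f) ν₂ :=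
    hf.integral_prod_right.sub (integrable_const _)
  by_cases hx : Integrable (fun y => f x y) ν₂
  · have h1 : Integrable (fun y => f x y - hoeffdingFst ν₁ ν₂ f x) ν₂ :=
      hx.sub (integrable_const _)
    have h2 : Integrable (fun y => f x y - hoeffdingFst ν₁ ν₂ f x - hoeffdingSnd ν₁ ν₂ f y) ν₂ :=
      h1.sub hu
    simp only [hoeffdingRem]
    rw [integral_sub h2 (integrable_const _), integral_sub h1 hu,
      integral_sub hx (integrable_const _),
      integral_hoeffdingSnd hf, hoeffdingFst]
    simp
  · refine integral_undef fun h => hx ?_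
    refine ((h.add hu).add (integrable_const (hoeffdingFst ν₁ ν₂ f x +
      ∫ z, Function.uncurry f z ∂(ν₁.prod ν₂)))).congr (Filter.Eventually.of_forall fun y => ?_)
    simp only [Pi.add_apply, hoeffdingRem]
    ring

theorem isDegenerateKernel_hoeffdingRem (hf : Measurable (Function.uncurry f))
    (hf2 : MemLp (Function.uncurry f) 2 (ν₁.prod ν₂)) :
    IsDegenerateKernel ν₁ ν₂ (hoeffdingRem ν₁ ν₂ f) where
  measurable :=
    ((hf.sub ((measurable_hoeffdingFst hf).comp measurable_fst)).sub
      ((measurable_hoeffdingSnd hf).comp measurable_snd)).sub_const _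
  memLp :=
    ((hf2.sub ((memLp_hoeffdingFst hf hf2).comp_measurePreserving
      (measurePreserving_fst))).sub ((memLp_hoeffdingSnd hf hf2).comp_measurePreserving
      (measurePreserving_snd))).sub (memLp_const _)
  integral_fst := integral_hoeffdingRem_fst (hf2.integrable one_le_two)
  integral_snd := integral_hoeffdingRem_snd (hf2.integrable one_le_two)

end Hoeffding

section IID

variable {Ω α ι : Type*} [MeasurableSpace Ω] [MeasurableSpace α] {μ : Measure Ω}
  {Z : ι → Ω → α} {ν : Measure α}

theorem ProbabilityTheory.iIndepFun.measurePreserving_prodMk (hmeas : ∀ i, Measurable (Z i))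
    (hindep : iIndepFun Z μ) (hν : ∀ i, μ.map (Z i) = ν) {a b : ι} (hab : a ≠ b) :
    MeasurePreserving (fun ω => (Z a ω, Z b ω)) μ (ν.prod ν) := by
  have := hindep.isProbabilityMeasure
  refine ⟨(hmeas a).prodMk (hmeas b), ?_⟩
  rw [(indepFun_iff_map_prod_eq_prod_map_map (hmeas a).aemeasurable
    (hmeas b).aemeasurable).mp (hindep.indepFun hab), hν a, hν b]

theorem ProbabilityTheory.iIndepFun.indepFun_triple_of_ne (hmeas : ∀ i, Measurable (Z i))
    (hindep : iIndepFun Z μ) {a b c d : ι} (hab : a ≠ b) (hac : a ≠ c) (had : a ≠ d) :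
    IndepFun (Z a) (fun ω => (Z b ω, Z c ω, Z d ω)) μ := by
  classical
  have hdisj : Disjoint ({a} : Finset ι) {b, c, d} := by simp [hab, hac, had]
  have hφ : Measurable fun x : ({a} : Finset ι) → α => x ⟨a, by simp⟩ := measurable_pi_apply _
  have hψ : Measurable fun x : ({b, c, d} : Finset ι) → α =>
      (x ⟨b, by simp⟩, x ⟨c, by simp⟩, x ⟨d, by simp⟩) := by fun_prop
  exact (hindep.indepFun_finset _ _ hdisj hmeas).comp hφ hψ

/-- `Z a` is independent of `(Z b, Z c, Z d)`, so it can be integrated out first. -/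
theorem integral_mul_eq_zero_of_ne (hmeas : ∀ i, Measurable (Z i)) (hindep : iIndepFun Z μ)
    (hν : ∀ i, μ.map (Z i) = ν) {a b c d : ι} (hab : a ≠ b) (hac : a ≠ c) (had : a ≠ d)
    {g ψ : α → α → ℝ} (hg : Measurable (Function.uncurry g))
    (hψ : Measurable (Function.uncurry ψ))
    (hint : Integrable (fun ω => g (Z a ω) (Z b ω) * ψ (Z c ω) (Z d ω)) μ)
    (hcent : ∀ y, ∫ x, g x y ∂ν = 0) :
    ∫ ω, g (Z a ω) (Z b ω) * ψ (Z c ω) (Z d ω) ∂μ = 0 :=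
  have := hindep.isProbabilityMeasure
  IndepFun.integral_eq_zero_of_integral_eq_zero (G := fun x y => g x y.1 * ψ y.2.1 y.2.2)
    (hindep.indepFun_triple_of_ne hmeas hab hac had) (hmeas a)
    ((hmeas b).prodMk ((hmeas c).prodMk (hmeas d)))
    ((hg.comp (measurable_fst.prodMk measurable_snd.fst)).mul (hψ.comp measurable_snd.snd))
    hint fun y => by rw [hν a, integral_mul_const, hcent, zero_mul]

theorem integral_comp_mul_comp_eq_zero (hmeas : ∀ i, Measurable (Z i)) (hindep : iIndepFun Z μ)
    (hν : ∀ i, μ.map (Z i) = ν) {φ ψ : α → ℝ} (hφ : Measurable φ) (hψ : Measurable ψ)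
    (hφ2 : MemLp φ 2 ν) (hψ2 : MemLp ψ 2 ν) (hφ0 : ∫ x, φ x ∂ν = 0) {i j : ι} (hij : i ≠ j) :
    ∫ ω, φ (Z i ω) * ψ (Z j ω) ∂μ = 0 :=
  integral_mul_eq_zero_of_ne hmeas hindep hν (g := fun x _ => φ x) (ψ := fun x _ => ψ x)
    hij hij hij (hφ.comp measurable_fst) (hψ.comp measurable_fst)
    ((hφ2.comp_measurePreserving ⟨hmeas i, hν i⟩).integrable_mul
      (hψ2.comp_measurePreserving ⟨hmeas j, hν j⟩)) fun _ => hφ0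

theorem integral_comp_mul_degenerate_eq_zero (hmeas : ∀ i, Measurable (Z i))
    (hindep : iIndepFun Z μ) (hν : ∀ i, μ.map (Z i) = ν) {φ : α → ℝ} (hφ : Measurable φ)
    (hφ2 : MemLp φ 2 ν) {k : α → α → ℝ} (hk : IsDegenerateKernel ν ν k) (i : ι) {s r : ι}
    (hsr : s ≠ r) :
    ∫ ω, φ (Z i ω) * k (Z s ω) (Z r ω) ∂μ = 0 := by
  have hint : Integrable (fun ω => k (Z s ω) (Z r ω) * φ (Z i ω)) μ :=
    (hk.memLp.comp_measurePreserving (hindep.measurePreserving_prodMk hmeas hν hsr)).integrable_mul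
      (hφ2.comp_measurePreserving ⟨hmeas i, hν i⟩)
  simp_rw [mul_comm (φ _)]
  by_cases his : i = s
  · subst his
    exact integral_mul_eq_zero_of_ne hmeas hindep hν (g := fun x y => k y x)
      (ψ := fun x _ => φ x) hsr.symm hsr.symm hsr.symm (hk.measurable.comp measurable_swap)
      (hφ.comp measurable_fst) hint hk.integral_snd
  · exact integral_mul_eq_zero_of_ne hmeas hindep hν (ψ := fun x _ => φ x) hsr (Ne.symm his)
      (Ne.symm his) hk.measurable (hφ.comp measurable_fst) hint hk.integral_fst

theorem integral_degenerate_mul_degenerate_eq_zero [LinearOrder ι]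
    (hmeas : ∀ i, Measurable (Z i)) (hindep : iIndepFun Z μ) (hν : ∀ i, μ.map (Z i) = ν)
    {k k' : α → α → ℝ} (hk : IsDegenerateKernel ν ν k) (hk' : IsDegenerateKernel ν ν k')
    {s r s' r' : ι} (hrs : r < s) (hrs' : r' < s') (hne : (s, r) ≠ (s', r')) :
    ∫ ω, k (Z s ω) (Z r ω) * k' (Z s' ω) (Z r' ω) ∂μ = 0 := by
  have hpair : ∀ {a b : ι}, b < a → MeasurePreserving (fun ω => (Z a ω, Z b ω)) μ (ν.prod ν) :=
    fun hba => hindep.measurePreserving_prodMk hmeas hν hba.ne'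
  have hint := (hk.memLp.comp_measurePreserving (hpair hrs)).integrable_mul
    (hk'.memLp.comp_measurePreserving (hpair hrs'))
  by_cases hss : s = s'
  · subst hss
    have hrr : r ≠ r' := fun h => hne (by rw [h])
    exact integral_mul_eq_zero_of_ne hmeas hindep hν (g := fun x y => k y x) hrs.ne hrs.ne hrr
      (hk.measurable.comp measurable_swap) hk'.measurable hint hk.integral_snd
  by_cases hsr' : s = r'
  · subst hsr'
    simp_rw [mul_comm (k (Z s _) (Z r _))]
    exact integral_mul_eq_zero_of_ne hmeas hindep hν hrs'.ne' hrs'.ne' (hrs.trans hrs').ne'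
      hk'.measurable hk.measurable ((hk'.memLp.comp_measurePreserving (hpair hrs')).integrable_mul
        (hk.memLp.comp_measurePreserving (hpair hrs))) hk'.integral_fst
  · exact integral_mul_eq_zero_of_ne hmeas hindep hν hrs.ne' hss hsr' hk.measurable
      hk'.measurable hint hk.integral_fst

theorem integral_sq_sum_add_sum_degenerate [LinearOrder ι] (hmeas : ∀ i, Measurable (Z i))
    (hindep : iIndepFun Z μ) (hν : ∀ i, μ.map (Z i) = ν) {g : ι → α → ℝ}
    (hg : ∀ j, Measurable (g j)) (hg2 : ∀ j, MemLp (g j) 2 ν) (hg0 : ∀ j, ∫ x, g j x ∂ν = 0)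
    {k : α → α → ℝ} (hk : IsDegenerateKernel ν ν k) (J : Finset ι) (T : Finset (Σ _ : ι, ι))
    (hT : ∀ q ∈ T, q.2 < q.1) (c : (Σ _ : ι, ι) → ℝ) :
    ∫ ω, (∑ j ∈ J, g j (Z j ω) + ∑ q ∈ T, c q * k (Z q.1 ω) (Z q.2 ω)) ^ 2 ∂μ =
      ∑ j ∈ J, ∫ x, g j x ^ 2 ∂ν +
        (∑ q ∈ T, c q ^ 2) * ∫ z, Function.uncurry k z ^ 2 ∂(ν.prod ν) := by
  have hZ : ∀ j, MeasurePreserving (Z j) μ ν := fun j => ⟨hmeas j, hν j⟩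
  have hpair : ∀ q ∈ T, MeasurePreserving (fun ω => (Z q.1 ω, Z q.2 ω)) μ (ν.prod ν) :=
    fun q hq => hindep.measurePreserving_prodMk hmeas hν (hT q hq).ne'
  have hck : ∀ q, IsDegenerateKernel ν ν fun x y => c q * k x y := fun q => hk.const_mul (c q)
  let X : ι ⊕ (Σ _ : ι, ι) → Ω → ℝ :=
    Sum.elim (fun j ω => g j (Z j ω)) (fun q ω => c q * k (Z q.1 ω) (Z q.2 ω))
  have hX : ∀ i ∈ J.disjSum T, MemLp (X i) 2 μ := by
    rintro (j | q) hi
    · exact (hg2 j).comp_measurePreserving (hZ j)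
    · exact (hck q).memLp.comp_measurePreserving (hpair q (by simpa using hi))
  have hcross : ∀ j, ∀ q ∈ T, ∫ ω, X (.inl j) ω * X (.inr q) ω ∂μ = 0 := fun j q hq =>
    integral_comp_mul_degenerate_eq_zero hmeas hindep hν (hg j) (hg2 j) (hck q) j (hT q hq).ne'
  have horth : ∀ i ∈ J.disjSum T, ∀ i' ∈ J.disjSum T, i ≠ i' →
      ∫ ω, X i ω * X i' ω ∂μ = 0 := by
    rintro (j | q) hi (j' | q') hi' hne <;>
      simp only [Finset.inl_mem_disjSum, Finset.inr_mem_disjSum] at hi hi'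
    · exact integral_comp_mul_comp_eq_zero hmeas hindep hν (hg j) (hg j') (hg2 j) (hg2 j')
        (hg0 j) fun h => hne (by rw [h])
    · exact hcross j q' hi'
    · simp_rw [mul_comm (X (.inr q) _)]
      exact hcross j' q hi
    · refine integral_degenerate_mul_degenerate_eq_zero hmeas hindep hν (hck q) (hck q')
        (hT q hi) (hT q' hi') fun h => hne ?_
      obtain ⟨h1, h2⟩ := Prod.ext_iff.mp h
      exact congrArg Sum.inr (Sigma.ext h1 (heq_of_eq h2))
  have hsum : ∀ ω, ∑ j ∈ J, g j (Z j ω) + ∑ q ∈ T, c q * k (Z q.1 ω) (Z q.2 ω) =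
      ∑ i ∈ J.disjSum T, X i ω := fun ω => by simp [X, Finset.sum_disjSum]
  simp_rw [hsum]
  rw [integral_sq_sum_of_orthogonal _ hX horth, Finset.sum_disjSum, Finset.sum_mul]
  congr 1
  · exact Finset.sum_congr rfl fun j _ =>
      (hZ j).integral_comp_of_aestronglyMeasurable ((hg j).pow_const 2).aestronglyMeasurable
  · refine Finset.sum_congr rfl fun q hq => ?_
    simp only [X, Sum.elim_inr, mul_pow, integral_const_mul]
    exact congrArg _ ((hpair q hq).integral_comp_of_aestronglyMeasurable
      (hk.measurable.pow_const 2).aestronglyMeasurable)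

theorem covar_self_eq_hoeffding [LinearOrder ι] [IsProbabilityMeasure ν]
    (hmeas : ∀ i, Measurable (Z i)) (hindep : iIndepFun Z μ) (hν : ∀ i, μ.map (Z i) = ν)
    {f : α → α → ℝ} (hf : Measurable (Function.uncurry f))
    (hf2 : MemLp (Function.uncurry f) 2 (ν.prod ν)) {s r : ι} (hrs : r < s) :
    covar μ (fun ω => f (Z s ω) (Z r ω)) (fun ω => f (Z s ω) (Z r ω)) =
      ∫ x, hoeffdingFst ν ν f x ^ 2 ∂ν + ∫ y, hoeffdingSnd ν ν f y ^ 2 ∂ν +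
        ∫ z, Function.uncurry (hoeffdingRem ν ν f) z ^ 2 ∂(ν.prod ν) := by
  have hmean : ∫ ω, f (Z s ω) (Z r ω) ∂μ = ∫ z, Function.uncurry f z ∂(ν.prod ν) :=
    (hindep.measurePreserving_prodMk hmeas hν hrs.ne').integral_comp_of_aestronglyMeasurable
      hf.aestronglyMeasurable
  have key := integral_sq_sum_add_sum_degenerate hmeas hindep hν
    (g := fun j => if j = s then hoeffdingFst ν ν f else hoeffdingSnd ν ν f)
    (fun j => by split_ifs; exacts [measurable_hoeffdingFst hf, measurable_hoeffdingSnd hf])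
    (fun j => by split_ifs; exacts [memLp_hoeffdingFst hf hf2, memLp_hoeffdingSnd hf hf2])
    (fun j => by split_ifs; exacts [integral_hoeffdingFst (hf2.integrable one_le_two),
      integral_hoeffdingSnd (hf2.integrable one_le_two)])
    (isDegenerateKernel_hoeffdingRem hf hf2) {s, r} {⟨s, r⟩} (by simpa using hrs) fun _ => 1
  simp only [Finset.sum_pair hrs.ne', if_pos, if_neg hrs.ne, Finset.sum_singleton, one_mul,
    one_pow] at key
  unfold covar
  simp_rw [hmean, ← sq, sub_integral_eq_hoeffdingFst_add_hoeffdingSnd_add_hoeffdingRem]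
  exact key

end IID

theorem Finset.sum_sum_eq_sum_add_two_mul_sum_lt {ι : Type*} [LinearOrder ι] (I : Finset ι)
    (F : ι → ι → ℝ) (hF : ∀ s s', F s s' = F s' s) :
    ∑ s ∈ I, ∑ s' ∈ I, F s s' = ∑ s ∈ I, F s s + 2 * ∑ s ∈ I, ∑ s' ∈ I with s' < s, F s s' := by
  have hsplit : ∀ s ∈ I, ∑ s' ∈ I, F s s' =
      F s s + ∑ s' ∈ I with s' < s, F s s' + ∑ s' ∈ I with s < s', F s s' := by
    intro s hs
    have hdiag : F s s = ∑ s' ∈ I, if s' = s then F s s' else 0 := by simp [hs]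
    rw [Finset.sum_filter, Finset.sum_filter, hdiag, ← Finset.sum_add_distrib,
      ← Finset.sum_add_distrib]
    refine Finset.sum_congr rfl fun s' _ => ?_
    rcases lt_trichotomy s' s with h | rfl | h
    · simp [h, h.ne, h.not_gt]
    · simp
    · simp [h, h.ne', h.not_gt]
  have hswap : ∑ s ∈ I, ∑ s' ∈ I with s < s', F s s' = ∑ s ∈ I, ∑ s' ∈ I with s' < s, F s s' := by
    simp_rw [Finset.sum_filter]
    rw [Finset.sum_comm]
    simp_rw [hF]
  rw [Finset.sum_congr rfl hsplit, Finset.sum_add_distrib, Finset.sum_add_distrib, hswap]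
  ring

theorem sum_sq_le_one_of_sum_eq_one {ι : Type*} {s : Finset ι} {p : ι → ℝ} (hp0 : ∀ r ∈ s, 0 ≤ p r)
    (hp1 : ∑ r ∈ s, p r = 1) : ∑ r ∈ s, p r ^ 2 ≤ 1 := by
  simpa [hp1] using Finset.sum_sq_le_sq_sum_of_nonneg hp0

theorem Finset.sum_range_ite_lt {s N : ℕ} (hsN : s ≤ N) (g : ℕ → ℝ) :
    ∑ j ∈ range N, (if j < s then g j else 0) = ∑ j ∈ range s, g j := by
  rw [← Finset.sum_filter]
  congr 1
  ext j
  simp only [Finset.mem_filter, Finset.mem_range]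
  omega

section Weights

variable (I : Finset ℕ) (w : ℕ → ℝ) (p : ℕ → ℕ → ℝ)

def sndWeight (j : ℕ) : ℝ := ∑ s ∈ I, if j < s then w s * p s j else 0

variable {I w p} {N : ℕ}

theorem sum_mul_sum_mul_add_add_eq (hI : ∀ s ∈ I, s < N)
    (hp1 : ∀ s ∈ I, ∑ r ∈ range s, p s r = 1) (V U : ℕ → ℝ) (K : ℕ → ℕ → ℝ) :
    ∑ s ∈ I, w s * ∑ r ∈ range s, p s r * (V s + U r + K s r) =
      ∑ j ∈ range N, ((if j ∈ I then w j else 0) * V j + sndWeight I w p j * U j) +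
        ∑ q ∈ I.sigma range, w q.1 * p q.1 q.2 * K q.1 q.2 := by
  have hV : ∑ j ∈ range N, (if j ∈ I then w j else 0) * V j = ∑ s ∈ I, w s * V s := by
    simp_rw [ite_mul, zero_mul]
    rw [Finset.sum_ite_mem, Finset.inter_eq_right.mpr fun s hs => Finset.mem_range.mpr (hI s hs)]
  have hU : ∑ j ∈ range N, sndWeight I w p j * U j =
      ∑ s ∈ I, ∑ r ∈ range s, w s * p s r * U r := by
    simp_rw [sndWeight, Finset.sum_mul, ite_mul, zero_mul]
    rw [Finset.sum_comm]
    exact Finset.sum_congr rfl fun s hs => Finset.sum_range_ite_lt (hI s hs).le _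
  rw [Finset.sum_add_distrib, hV, hU, Finset.sum_sigma, ← Finset.sum_add_distrib,
    ← Finset.sum_add_distrib]
  refine Finset.sum_congr rfl fun s hs => ?_
  have hVs : w s * V s = ∑ r ∈ range s, w s * p s r * V s := by
    rw [← Finset.sum_mul, ← Finset.mul_sum, hp1 s hs, mul_one]
  rw [hVs, ← Finset.sum_add_distrib, ← Finset.sum_add_distrib, Finset.mul_sum]
  exact Finset.sum_congr rfl fun r _ => by ring

theorem sum_sq_ite_mem_eq (hI : ∀ s ∈ I, s < N) :
    ∑ j ∈ range N, (if j ∈ I then w j else 0) ^ 2 = ∑ s ∈ I, w s ^ 2 := by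
  simp_rw [ite_pow, zero_pow two_ne_zero]
  rw [Finset.sum_ite_mem, Finset.inter_eq_right.mpr fun s hs => Finset.mem_range.mpr (hI s hs)]

theorem sum_sigma_sq_le (hp0 : ∀ s ∈ I, ∀ r < s, 0 ≤ p s r)
    (hp1 : ∀ s ∈ I, ∑ r ∈ range s, p s r = 1) :
    ∑ q ∈ I.sigma range, (w q.1 * p q.1 q.2) ^ 2 ≤ ∑ s ∈ I, w s ^ 2 := by
  rw [Finset.sum_sigma]
  refine Finset.sum_le_sum fun s hs => ?_
  simp_rw [mul_pow, ← Finset.mul_sum]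
  exact mul_le_of_le_one_right (sq_nonneg _) (sum_sq_le_one_of_sum_eq_one
    (fun r hr => hp0 s hs r (Finset.mem_range.mp hr)) (hp1 s hs))

/-- Monotonicity of `p` in `s` lets the product of two samples sharing `Z r` be charged to the
earlier one. -/
theorem sum_sq_sndWeight_le (hI : ∀ s ∈ I, s < N) (hw : ∀ s ∈ I, 0 ≤ w s)
    (hp0 : ∀ s ∈ I, ∀ r < s, 0 ≤ p s r) (hp1 : ∀ s ∈ I, ∑ r ∈ range s, p s r = 1)
    (hmono : ∀ s ∈ I, ∀ s' ∈ I, s' < s → ∀ r < s', p s r ≤ p s' r) :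
    ∑ j ∈ range N, sndWeight I w p j ^ 2 ≤ ∑ s ∈ I, w s ^ 2 +
      2 * ∑ s ∈ I, ∑ s' ∈ I with s' < s, w s * w s' * ∑ r ∈ range s', p s' r ^ 2 := by
  set x : ℕ → ℕ → ℝ := fun s j => if j < s then w s * p s j else 0 with hx
  have hexpand : ∑ j ∈ range N, sndWeight I w p j ^ 2 =
      ∑ s ∈ I, ∑ s' ∈ I, ∑ j ∈ range N, x s j * x s' j := by
    simp_rw [sndWeight, sq, Finset.sum_mul_sum]
    rw [Finset.sum_comm]
    exact Finset.sum_congr rfl fun s _ => Finset.sum_comm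
  rw [hexpand, Finset.sum_sum_eq_sum_add_two_mul_sum_lt _ _ fun s s' =>
    Finset.sum_congr rfl fun j _ => mul_comm _ _]
  refine add_le_add (Finset.sum_le_sum fun s hs => ?_) (mul_le_mul_of_nonneg_left
    (Finset.sum_le_sum fun s hs => Finset.sum_le_sum fun s' hs' => ?_) zero_le_two)
  · calc ∑ j ∈ range N, x s j * x s j
          = ∑ j ∈ range N, if j < s then w s ^ 2 * p s j ^ 2 else 0 :=
          Finset.sum_congr rfl fun j _ => by simp only [hx]; split_ifs <;> ring
      _ = w s ^ 2 * ∑ r ∈ range s, p s r ^ 2 := by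
          rw [Finset.sum_range_ite_lt (hI s hs).le, Finset.mul_sum]
      _ ≤ w s ^ 2 := mul_le_of_le_one_right (sq_nonneg _) (sum_sq_le_one_of_sum_eq_one
          (fun r hr => hp0 s hs r (Finset.mem_range.mp hr)) (hp1 s hs))
  · obtain ⟨hs'I, hs's⟩ := Finset.mem_filter.mp hs'
    rw [Finset.mul_sum, ← Finset.sum_range_ite_lt (hI s' hs'I).le]
    refine Finset.sum_le_sum fun j _ => ?_
    by_cases hj : j < s'
    · simp only [hx, if_pos hj, if_pos (hj.trans hs's)]
      calc w s * p s j * (w s' * p s' j) = w s * w s' * (p s j * p s' j) := by ring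
        _ ≤ w s * w s' * (p s' j * p s' j) :=
          mul_le_mul_of_nonneg_left (mul_le_mul_of_nonneg_right
            (hmono s hs s' hs'I hs's j hj) (hp0 s' hs'I j hj)) (mul_nonneg (hw s hs) (hw s' hs'I))
        _ = w s * w s' * p s' j ^ 2 := by ring
    · simp [hx, hj]

end Weights

section Estimator

theorem sum_mul_sum_sub_eq_hoeffding {α : Type*} [MeasurableSpace α] {ν : Measure α}
    {f : α → α → ℝ} {I : Finset ℕ} {N : ℕ} (hI : ∀ s ∈ I, s < N) {w : ℕ → ℝ} {p : ℕ → ℕ → ℝ}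
    (hp1 : ∀ s ∈ I, ∑ r ∈ range s, p s r = 1) (x : ℕ → α) :
    ∑ s ∈ I, w s * ∑ r ∈ range s, p s r * f (x s) (x r) -
        (∫ z, Function.uncurry f z ∂(ν.prod ν)) * ∑ s ∈ I, w s =
      ∑ j ∈ range N, ((if j ∈ I then w j else 0) * hoeffdingFst ν ν f (x j) +
          sndWeight I w p j * hoeffdingSnd ν ν f (x j)) +
        ∑ q ∈ I.sigma range, w q.1 * p q.1 q.2 * hoeffdingRem ν ν f (x q.1) (x q.2) := by
  rw [← sum_mul_sum_mul_add_add_eq hI hp1 (fun j => hoeffdingFst ν ν f (x j))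
    (fun j => hoeffdingSnd ν ν f (x j)) fun s r => hoeffdingRem ν ν f (x s) (x r),
    Finset.mul_sum, ← Finset.sum_sub_distrib]
  refine Finset.sum_congr rfl fun s hs => ?_
  simp_rw [← sub_integral_eq_hoeffdingFst_add_hoeffdingSnd_add_hoeffdingRem, mul_sub,
    Finset.sum_sub_distrib, ← Finset.sum_mul, hp1 s hs]
  ring

variable {Ω α : Type*} [MeasurableSpace Ω] [MeasurableSpace α] {μ : Measure Ω}
  {Z : ℕ → Ω → α} {ν : Measure α} [IsProbabilityMeasure ν] {f : α → α → ℝ}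

theorem variance_weighted_sum_le (hmeas : ∀ i, Measurable (Z i)) (hindep : iIndepFun Z μ)
    (hν : ∀ i, μ.map (Z i) = ν) (hf : Measurable (Function.uncurry f))
    (hf2 : MemLp (Function.uncurry f) 2 (ν.prod ν)) {I : Finset ℕ} {N : ℕ}
    (hI : ∀ s ∈ I, s < N) {w : ℕ → ℝ} {p : ℕ → ℕ → ℝ}
    (hp1 : ∀ s ∈ I, ∑ r ∈ range s, p s r = 1) :
    variance (fun ω => ∑ s ∈ I, w s * ∑ r ∈ range s, p s r * f (Z s ω) (Z r ω)) μ ≤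
      (∫ x, hoeffdingFst ν ν f x ^ 2 ∂ν + ∫ y, hoeffdingSnd ν ν f y ^ 2 ∂ν) *
          ∑ j ∈ range N, ((if j ∈ I then w j else 0) ^ 2 + sndWeight I w p j ^ 2) +
        (∑ q ∈ I.sigma range, (w q.1 * p q.1 q.2) ^ 2) *
          ∫ z, Function.uncurry (hoeffdingRem ν ν f) z ^ 2 ∂(ν.prod ν) := by
  have := hindep.isProbabilityMeasure
  set m := ∫ z, Function.uncurry f z ∂(ν.prod ν)
  set Y := fun ω => ∑ s ∈ I, w s * ∑ r ∈ range s, p s r * f (Z s ω) (Z r ω)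
  set g : ℕ → α → ℝ := fun j x =>
    (if j ∈ I then w j else 0) * hoeffdingFst ν ν f x + sndWeight I w p j * hoeffdingSnd ν ν f x
  have hf1 := hf2.integrable one_le_two
  have hYm : AEStronglyMeasurable Y μ := by
    have := fun s r => hf.comp ((hmeas s).prodMk (hmeas r))
    fun_prop
  have hdecomp : ∀ ω, Y ω - m * ∑ s ∈ I, w s = ∑ j ∈ range N, g j (Z j ω) +
      ∑ q ∈ I.sigma range, w q.1 * p q.1 q.2 * hoeffdingRem ν ν f (Z q.1 ω) (Z q.2 ω) :=
    fun ω => sum_mul_sum_sub_eq_hoeffding hI hp1 fun j => Z j ω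
  calc variance Y μ = variance (fun ω => Y ω - m * ∑ s ∈ I, w s) μ :=
        (variance_sub_const hYm _).symm
    _ ≤ ∫ ω, (Y ω - m * ∑ s ∈ I, w s) ^ 2 ∂μ :=
        variance_le_expectation_sq (hYm.sub aestronglyMeasurable_const)
    _ = ∑ j ∈ range N, ∫ x, g j x ^ 2 ∂ν + (∑ q ∈ I.sigma range, (w q.1 * p q.1 q.2) ^ 2) *
          ∫ z, Function.uncurry (hoeffdingRem ν ν f) z ^ 2 ∂(ν.prod ν) := by
        simp_rw [hdecomp]
        exact integral_sq_sum_add_sum_degenerate hmeas hindep hν (g := g)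
          (fun j => (measurable_const.mul (measurable_hoeffdingFst hf)).add
            (measurable_const.mul (measurable_hoeffdingSnd hf)))
          (fun j => ((memLp_hoeffdingFst hf hf2).const_mul _).add
            ((memLp_hoeffdingSnd hf hf2).const_mul _))
          (fun j => by
            simp only [g]
            rw [integral_add (((memLp_hoeffdingFst hf hf2).integrable one_le_two).const_mul _)
              (((memLp_hoeffdingSnd hf hf2).integrable one_le_two).const_mul _),
              integral_const_mul, integral_const_mul, integral_hoeffdingFst hf1,
              integral_hoeffdingSnd hf1, mul_zero, mul_zero, add_zero])
          (isDegenerateKernel_hoeffdingRem hf hf2) (range N) (I.sigma range)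
          (fun q hq => Finset.mem_range.mp (Finset.mem_sigma.mp hq).2) _
    _ ≤ _ := by
        rw [Finset.mul_sum]
        gcongr with j
        exact (integral_sq_mul_add_mul_le (memLp_hoeffdingFst hf hf2)
          (memLp_hoeffdingSnd hf hf2) _ _).trans_eq (mul_comm _ _)

/-- The left side of `hσ` is the variance of a single summand, by `covar_self_eq_hoeffding`. -/
theorem variance_weighted_sum_le_of_le (hmeas : ∀ i, Measurable (Z i)) (hindep : iIndepFun Z μ)
    (hν : ∀ i, μ.map (Z i) = ν) (hf : Measurable (Function.uncurry f))
    (hf2 : MemLp (Function.uncurry f) 2 (ν.prod ν)) {I : Finset ℕ} {w : ℕ → ℝ}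
    {p : ℕ → ℕ → ℝ} (hw : ∀ s ∈ I, 0 ≤ w s) (hp0 : ∀ s ∈ I, ∀ r < s, 0 ≤ p s r)
    (hp1 : ∀ s ∈ I, ∑ r ∈ range s, p s r = 1)
    (hmono : ∀ s ∈ I, ∀ s' ∈ I, s' < s → ∀ r < s', p s r ≤ p s' r) {σ2 : ℝ}
    (hσ : ∫ x, hoeffdingFst ν ν f x ^ 2 ∂ν + ∫ y, hoeffdingSnd ν ν f y ^ 2 ∂ν +
      ∫ z, Function.uncurry (hoeffdingRem ν ν f) z ^ 2 ∂(ν.prod ν) ≤ σ2) :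
    variance (fun ω => ∑ s ∈ I, w s * ∑ r ∈ range s, p s r * f (Z s ω) (Z r ω)) μ ≤
      σ2 * (2 * ∑ s ∈ I, w s ^ 2 +
        2 * ∑ s ∈ I, ∑ s' ∈ I with s' < s, w s * w s' * ∑ r ∈ range s', p s' r ^ 2) := by
  have hI : ∀ s ∈ I, s < I.sup id + 1 := fun s hs => Nat.lt_succ_of_le (Finset.le_sup (f := id) hs)
  have hvar := variance_weighted_sum_le hmeas hindep hν hf hf2 hI (w := w) hp1
  rw [Finset.sum_add_distrib, sum_sq_ite_mem_eq hI] at hvar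
  have hβ := sum_sq_sndWeight_le hI hw hp0 hp1 hmono
  have hP := sum_sigma_sq_le (w := w) hp0 hp1
  have hA : 0 ≤ ∫ x, hoeffdingFst ν ν f x ^ 2 ∂ν + ∫ y, hoeffdingSnd ν ν f y ^ 2 ∂ν :=
    add_nonneg (integral_nonneg fun _ => sq_nonneg _) (integral_nonneg fun _ => sq_nonneg _)
  have hE : 0 ≤ ∫ z, Function.uncurry (hoeffdingRem ν ν f) z ^ 2 ∂(ν.prod ν) :=
    integral_nonneg fun _ => sq_nonneg _
  have hW : 0 ≤ ∑ s ∈ I, w s ^ 2 := Finset.sum_nonneg fun _ _ => sq_nonneg _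
  have hB : 0 ≤ ∑ j ∈ range (I.sup id + 1), sndWeight I w p j ^ 2 :=
    Finset.sum_nonneg fun _ _ => sq_nonneg _
  nlinarith [mul_le_mul_of_nonneg_left hβ hA, mul_le_mul_of_nonneg_right hP hE,
    mul_nonneg hE (hB.trans hβ), mul_le_mul_of_nonneg_right hσ (add_nonneg hW (hB.trans hβ))]

end Estimator

theorem incremental_sampling_variance_bound_general {Ω α : Type*} [MeasurableSpace Ω]
    [MeasurableSpace α] (μ : Measure Ω) [IsProbabilityMeasure μ]
    (Z : ℕ → Ω → α) (hmeas : ∀ i, Measurable (Z i))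
    (hindep : iIndepFun Z μ)
    (hident : ∀ i, μ.map (Z i) = μ.map (Z 0))
    (f : α → α → ℝ) (hf : Measurable (Function.uncurry f))
    (hL2 : ∀ s r, MemLp (fun ω => f (Z s ω) (Z r ω)) 2 μ)
    (t₀ t : ℕ) (ht : t₀ ≤ t) (w : ℕ → ℝ) (p : ℕ → ℕ → ℝ) (σ2 : ℝ)
    (hw : ∀ s ∈ Finset.Icc t₀ t, 0 ≤ w s)
    (hp_nonneg : ∀ s ∈ Finset.Icc t₀ t, ∀ r < s, 0 ≤ p s r)
    (hp_sum : ∀ s ∈ Finset.Icc t₀ t, ∑ r ∈ Finset.range s, p s r = 1)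
    (hp_mono : ∀ s' s, t₀ ≤ s' → s' ≤ s → s ≤ t → ∀ r < s', p s r ≤ p s' r)
    (hcov : ∀ s ∈ Finset.Icc t₀ t, ∀ s' ∈ Finset.Icc t₀ t,
      ∀ r < s, ∀ r' < s',
        |covar μ (fun ω => f (Z s ω) (Z r ω))
          (fun ω => f (Z s' ω) (Z r' ω))| ≤ σ2) :
    variance (fun ω => ∑ s ∈ Finset.Icc t₀ t,
        w s * ∑ r ∈ Finset.range s, p s r * f (Z s ω) (Z r ω)) μ ≤
      4 * σ2 * (∑ s ∈ Finset.Icc t₀ t, (w s) ^ 2) +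
        2 * σ2 * ∑ s ∈ Finset.Icc t₀ t, ∑ s' ∈ Finset.Ico t₀ s,
          w s * w s' * ∑ r ∈ Finset.range s', (p s' r) ^ 2 := by
  set ν := μ.map (Z 0)
  have : IsProbabilityMeasure ν := Measure.isProbabilityMeasure_map (hmeas 0).aemeasurable
  have hν : ∀ i, μ.map (Z i) = ν := hident
  have ht₀I : t₀ ∈ Finset.Icc t₀ t := Finset.left_mem_Icc.mpr ht
  have ht₀ : 0 < t₀ := Nat.pos_of_ne_zero fun h => by simpa [h] using hp_sum t₀ ht₀I
  have hf2 : MemLp (Function.uncurry f) 2 (ν.prod ν) := by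
    have hpair := hindep.measurePreserving_prodMk hmeas hν one_ne_zero
    rw [← hpair.map_eq]
    exact (memLp_map_measure_iff (hpair.map_eq ▸ hf.aestronglyMeasurable)
      hpair.measurable.aemeasurable).mpr (hL2 1 0)
  have hcov₀ := hcov t₀ ht₀I t₀ ht₀I 0 ht₀ 0 ht₀
  have hσ := (covar_self_eq_hoeffding hmeas hindep hν hf hf2 ht₀).symm.trans_le
    ((le_abs_self _).trans hcov₀)
  have hvar := variance_weighted_sum_le_of_le hmeas hindep hν hf hf2 hw hp_nonneg hp_sum
    (fun s hs s' hs' hs's => hp_mono s' s (Finset.mem_Icc.mp hs').1 hs's.le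
      (Finset.mem_Icc.mp hs).2) hσ
  have hIco : ∀ F : ℕ → ℕ → ℝ, ∑ s ∈ Finset.Icc t₀ t, ∑ s' ∈ Finset.Icc t₀ t with s' < s, F s s' =
      ∑ s ∈ Finset.Icc t₀ t, ∑ s' ∈ Finset.Ico t₀ s, F s s' := fun F =>
    Finset.sum_congr rfl fun s hs => by rw [← Finset.Ico_add_one_right_eq_Icc,
      Finset.Ico_filter_lt_of_le_right (b := t + 1) (by grind)]
  rw [hIco] at hvar
  have hW : 0 ≤ ∑ s ∈ Finset.Icc t₀ t, w s ^ 2 := Finset.sum_nonneg fun _ _ => sq_nonneg _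
  nlinarith [mul_nonneg ((abs_nonneg _).trans hcov₀) hW]

/-- Proposition 2: general variance bound for incrementally sampled FI
estimators. -/
theorem incremental_sampling_variance_bound {Ω α : Type*} [MeasurableSpace Ω]
    [MeasurableSpace α] (μ : Measure Ω) [IsProbabilityMeasure μ]
    (Z : ℕ → Ω → α) (hmeas : ∀ i, Measurable (Z i))
    (hindep : iIndepFun Z μ)
    (hident : ∀ i, μ.map (Z i) = μ.map (Z 0))
    (f : α → α → ℝ) (hf : Measurable (Function.uncurry f))
    (hL2 : ∀ s r, MemLp (fun ω => f (Z s ω) (Z r ω)) 2 μ)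
    (t₀ t : ℕ) (ht : t₀ ≤ t) (w : ℕ → ℝ) (p : ℕ → ℕ → ℝ) (σ2 : ℝ)
    (hw : ∀ s ∈ Finset.Icc t₀ t, 0 ≤ w s)
    (hwsum : ∑ s ∈ Finset.Icc t₀ t, w s ≤ 1)
    (hp_nonneg : ∀ s ∈ Finset.Icc t₀ t, ∀ r < s, 0 ≤ p s r)
    (hp_sum : ∀ s ∈ Finset.Icc t₀ t, ∑ r ∈ Finset.range s, p s r = 1)
    (hp_mono : ∀ s' s, t₀ ≤ s' → s' ≤ s → s ≤ t → ∀ r < s', p s r ≤ p s' r)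
    (hcov : ∀ s ∈ Finset.Icc t₀ t, ∀ s' ∈ Finset.Icc t₀ t,
      ∀ r < s, ∀ r' < s',
        |covar μ (fun ω => f (Z s ω) (Z r ω))
          (fun ω => f (Z s' ω) (Z r' ω))| ≤ σ2) :
    variance (fun ω => ∑ s ∈ Finset.Icc t₀ t,
        w s * ∑ r ∈ Finset.range s, p s r * f (Z s ω) (Z r ω)) μ ≤
      4 * σ2 * (∑ s ∈ Finset.Icc t₀ t, (w s) ^ 2) +
        2 * σ2 * ∑ s ∈ Finset.Icc t₀ t, ∑ s' ∈ Finset.Ico t₀ s,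
          w s * w s' * ∑ r ∈ Finset.range s', (p s' r) ^ 2 :=
  incremental_sampling_variance_bound_general μ Z hmeas hindep hident f hf hL2 t₀ t ht w p σ2 hw
    hp_nonneg hp_sum hp_mono hcov
end

section
/- With X^{(age)} ∼ Uniform([20,80]) and X^{(salary)} ∼ Uniform([20,150]) independent, and the classification function of the agrawal concept 1 (class A iff (age<40 ∧ 50≤salary≤100) ∨ (40≤age<60 ∧ 75≤salary≤125) ∨ (age≥60 ∧ 25≤salary≤75)), the permutation feature importance of the salary feature — defined as P(class(X^{(age)}, X̃^{(salary)}) ≠ class(X^{(age)}, X^{(salary)})) for an independent copy X̃^{(salary)} of the salary feature — equals 3·((5/39)·(8/13) + (8/13)·(1/3)·(5/13)) = 240/507. -/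
open MeasureTheory Set

/-- Uniform distribution of the `age` feature on `[20, 80]`. -/
noncomputable def ageMeasure : Measure ℝ :=
  ((60 : ENNReal))⁻¹ • (volume.restrict (Set.Icc (20 : ℝ) 80))

/-- Uniform distribution of the `salary` feature on `[20, 150]`. -/
noncomputable def salaryMeasure : Measure ℝ :=
  ((130 : ENNReal))⁻¹ • (volume.restrict (Set.Icc (20 : ℝ) 150))

/-- Classification function of the agrawal stream, concept 1. -/
def agrawalClassA (age salary : ℝ) : Prop :=
  (age < 40 ∧ 50 ≤ salary ∧ salary ≤ 100) ∨
    (40 ≤ age ∧ age < 60 ∧ 75 ≤ salary ∧ salary ≤ 125) ∨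
    (60 ≤ age ∧ 25 ≤ salary ∧ salary ≤ 75)


/- For each age the class is membership of the salary in an interval of length 50 inside
`[20, 150]`, so conditionally on the age the class flips with probability
`2 · (5/13) · (8/13) = 80/169`, whatever the age band; integrating over the age gives
`80/169 = 240/507`. -/

open scoped ENNReal

theorem MeasureTheory.Measure.prod_setOf_not_mem_iff_mem {α : Type*} [MeasurableSpace α]
    (μ ν : Measure α) [SFinite ν] {I : Set α} (hI : MeasurableSet I) :
    (μ.prod ν) {p | ¬(p.2 ∈ I ↔ p.1 ∈ I)} = μ I * ν Iᶜ + μ Iᶜ * ν I := by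
  have hsplit : {p : α × α | ¬(p.2 ∈ I ↔ p.1 ∈ I)} = I ×ˢ Iᶜ ∪ Iᶜ ×ˢ I := by
    ext p; simp only [mem_ofPred_eq, mem_union, mem_prod, mem_compl_iff]; tauto
  have hdisj : Disjoint (I ×ˢ Iᶜ) (Iᶜ ×ˢ I) := disjoint_left.mpr fun _ h h' => h'.1 h.1
  rw [hsplit, measure_union hdisj (hI.compl.prod hI), Measure.prod_prod, Measure.prod_prod]

section UniformOnIcc

variable {l u : ℝ} {c : ℝ≥0∞}

theorem smul_volume_restrict_Icc_apply_Icc {a b : ℝ} (ha : l ≤ a) (hb : b ≤ u) :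
    (c • volume.restrict (Icc l u)) (Icc a b) = c * ENNReal.ofReal (b - a) := by
  rw [Measure.smul_apply, Measure.restrict_apply measurableSet_Icc,
    inter_eq_left.mpr (Icc_subset_Icc ha hb), Real.volume_Icc, smul_eq_mul]

theorem isProbabilityMeasure_inv_smul_volume_restrict_Icc (hc : c = ENNReal.ofReal (u - l))
    (hlu : l < u) : IsProbabilityMeasure (c⁻¹ • volume.restrict (Icc l u)) := by
  constructor
  rw [Measure.smul_apply, Measure.restrict_apply_univ, Real.volume_Icc, ← hc, smul_eq_mul]
  refine ENNReal.inv_mul_cancel ?_ (hc ▸ ENNReal.ofReal_ne_top)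
  rw [hc, ENNReal.ofReal_ne_zero_iff]
  linarith

end UniformOnIcc

instance : IsProbabilityMeasure ageMeasure :=
  isProbabilityMeasure_inv_smul_volume_restrict_Icc (by norm_num) (by norm_num)

instance : IsProbabilityMeasure salaryMeasure :=
  isProbabilityMeasure_inv_smul_volume_restrict_Icc (by norm_num) (by norm_num)

@[fun_prop]
theorem Measurable.agrawalClassA {α : Type*} [MeasurableSpace α] {f g : α → ℝ}
    (hf : Measurable f) (hg : Measurable g) : Measurable fun x => agrawalClassA (f x) (g x) := by
  unfold _root_.agrawalClassA
  fun_prop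

theorem exists_agrawalClassA_iff_mem_Icc (age : ℝ) :
    ∃ lo, 20 ≤ lo ∧ lo + 50 ≤ 150 ∧ ∀ s, agrawalClassA age s ↔ s ∈ Icc lo (lo + 50) := by
  rcases lt_or_ge age 40 with h40 | h40
  · refine ⟨50, by norm_num, by norm_num, fun s => ?_⟩
    simp only [agrawalClassA, mem_Icc]; grind
  rcases lt_or_ge age 60 with h60 | h60
  · refine ⟨75, by norm_num, by norm_num, fun s => ?_⟩
    simp only [agrawalClassA, mem_Icc]; grind
  · refine ⟨25, by norm_num, by norm_num, fun s => ?_⟩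
    simp only [agrawalClassA, mem_Icc]; grind

theorem salaryMeasure_Icc_length_fifty {lo : ℝ} (hlo : 20 ≤ lo) (hhi : lo + 50 ≤ 150) :
    salaryMeasure (Icc lo (lo + 50)) = ENNReal.ofReal (5 / 13) := by
  rw [salaryMeasure, smul_volume_restrict_Icc_apply_Icc hlo hhi, add_sub_cancel_left,
    show (130 : ℝ≥0∞) = ENNReal.ofReal 130 by norm_num, ← ENNReal.ofReal_inv_of_pos (by norm_num),
    ← ENNReal.ofReal_mul (by norm_num)]
  norm_num

theorem salaryMeasure_prod_setOf_not_mem_iff_mem_Icc {lo : ℝ} (hlo : 20 ≤ lo)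
    (hhi : lo + 50 ≤ 150) :
    (salaryMeasure.prod salaryMeasure) {p | ¬(p.2 ∈ Icc lo (lo + 50) ↔ p.1 ∈ Icc lo (lo + 50))} =
      ENNReal.ofReal (80 / 169) := by
  rw [Measure.prod_setOf_not_mem_iff_mem _ _ measurableSet_Icc,
    prob_compl_eq_one_sub measurableSet_Icc, salaryMeasure_Icc_length_fifty hlo hhi,
    ← ENNReal.ofReal_one, ← ENNReal.ofReal_sub _ (by norm_num),
    ← ENNReal.ofReal_mul (by norm_num), ← ENNReal.ofReal_mul (by norm_num),
    ← ENNReal.ofReal_add (by norm_num) (by norm_num)]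
  norm_num

/-- Ground-truth PFI (0-1 loss) of the salary feature for the agrawal stream:
the probability that replacing the salary by an independent copy flips the
class. -/
theorem agrawal_salary_pfi :
    (ageMeasure.prod (salaryMeasure.prod salaryMeasure))
        {z : ℝ × ℝ × ℝ | ¬(agrawalClassA z.1 z.2.2 ↔ agrawalClassA z.1 z.2.1)} =
      ENNReal.ofReal (3 * ((5 / 39) * (8 / 13) + (8 / 13) * (1 / 3) * (5 / 13))) := by
  have hmeas : MeasurableSet
      {z : ℝ × ℝ × ℝ | ¬(agrawalClassA z.1 z.2.2 ↔ agrawalClassA z.1 z.2.1)} :=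
    measurableSet_setOfPred.2 (by fun_prop)
  have hslice (age : ℝ) : (salaryMeasure.prod salaryMeasure)
      {p | ¬(agrawalClassA age p.2 ↔ agrawalClassA age p.1)} = ENNReal.ofReal (80 / 169) := by
    obtain ⟨lo, hlo, hhi, hclass⟩ := exists_agrawalClassA_iff_mem_Icc age
    simpa only [hclass] using salaryMeasure_prod_setOf_not_mem_iff_mem_Icc hlo hhi
  rw [Measure.prod_apply hmeas]
  simp only [preimage_ofPred_eq, hslice, lintegral_const, measure_univ, mul_one]
  norm_num
end
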